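/- Let G be a group generated by elements a, x, y, z with a² = x² = y² = z² = 1 such that {a, x, y, z} is a sandwich set in G, with [a,x] = 1 and [a,y] = 1, with [[z,x],[z,a]] = 1 and [[z,y],[z,a]] = 1, and assume the centre of G is trivial. Then [z,a,x] = [z,x,a] and [z,a,y] = [z,y,a]. -/

import Mathlib

/-- Left-normed commutator: `[u,v] = u⁻¹v⁻¹uv`. -/
def cmt {G : Type*} [Group G] (u v : G) : G := u⁻¹ * v⁻¹ * u * v

/-- Conjugation: `u^g = g⁻¹ug`. -/
def cnj {G : Type*} [Group G] (u g : G) : G := g⁻¹ * u * g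

/-- A subgroup is nilpotent of class at most `n`. -/
def classLE {G : Type*} [Group G] (H : Subgroup G) (n : ℕ) : Prop :=
  Subgroup.lowerCentralSeries (⊤ : Subgroup ↥H) n = ⊥

/-- `X` is a sandwich set in `G`. -/
def IsSandwichSet {G : Type*} [Group G] (X : Set G) : Prop :=
  ∀ u ∈ X, ∀ v ∈ X, ∀ g ∈ Subgroup.closure X,
    classLE (Subgroup.closure ({u, cnj v g} : Set G)) 2

/-!
Expanding `[z, ax] = [z, xa]` with the identity `[z, uv] = [z, v] [z, u]^v` gives
`[z, x] [z, a]^x = [z, a] [z, x]^a`. Since `[z, u, v] = [z, u]⁻¹ [z, u]^v`, the two sides of the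
claim differ only by the order of the factors `[z, a]⁻¹` and `[z, x]⁻¹`, which commute.
-/

section Commutator

variable {G : Type*} [Group G]

theorem cmt_eq_one_iff_commute {u v : G} : cmt u v = 1 ↔ Commute u v := by
  have h : cmt u v = (v * u)⁻¹ * (u * v) := by simp only [cmt, mul_inv_rev, mul_assoc]
  rw [h, inv_mul_eq_one, eq_comm]
  rfl

theorem cmt_eq_inv_mul_cnj (u v : G) : cmt u v = u⁻¹ * cnj u v := by
  simp only [cmt, cnj, mul_assoc]

theorem cmt_mul_right (z u v : G) : cmt z (u * v) = cmt z v * cnj (cmt z u) v := by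
  simp only [cmt, cnj]
  group

theorem cmt_cmt_eq_of_commute {z a x : G} (hax : Commute a x)
    (hcomm : Commute (cmt z x) (cmt z a)) : cmt (cmt z a) x = cmt (cmt z x) a := by
  have hexpand : cmt z x * cnj (cmt z a) x = cmt z a * cnj (cmt z x) a := by
    rw [← cmt_mul_right, ← cmt_mul_right, hax.eq]
  have hconj : cnj (cmt z a) x = (cmt z x)⁻¹ * (cmt z a * cnj (cmt z x) a) :=
    eq_inv_mul_of_mul_eq hexpand
  rw [cmt_eq_inv_mul_cnj (cmt z a), cmt_eq_inv_mul_cnj (cmt z x), hconj, ← mul_assoc, ← mul_assoc,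
    ← mul_inv_rev, hcomm.eq, mul_inv_rev, inv_mul_cancel_right]

end Commutator

theorem stmt15_general {G : Type*} [Group G] (a x y z : G)
    (hax : cmt a x = 1) (hay : cmt a y = 1)
    (h1 : cmt (cmt z x) (cmt z a) = 1) (h2 : cmt (cmt z y) (cmt z a) = 1) :
    cmt (cmt z a) x = cmt (cmt z x) a ∧ cmt (cmt z a) y = cmt (cmt z y) a :=
  ⟨cmt_cmt_eq_of_commute (cmt_eq_one_iff_commute.mp hax) (cmt_eq_one_iff_commute.mp h1),
    cmt_cmt_eq_of_commute (cmt_eq_one_iff_commute.mp hay) (cmt_eq_one_iff_commute.mp h2)⟩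

theorem stmt15 {G : Type*} [Group G] (a x y z : G)
    (hgen : Subgroup.closure ({a, x, y, z} : Set G) = ⊤)
    (ha : a ^ 2 = 1) (hx : x ^ 2 = 1) (hy : y ^ 2 = 1) (hz : z ^ 2 = 1)
    (hsand : IsSandwichSet ({a, x, y, z} : Set G))
    (hax : cmt a x = 1) (hay : cmt a y = 1)
    (h1 : cmt (cmt z x) (cmt z a) = 1) (h2 : cmt (cmt z y) (cmt z a) = 1)
    (hcen : Subgroup.center G = ⊥) :
    cmt (cmt z a) x = cmt (cmt z x) a ∧ cmt (cmt z a) y = cmt (cmt z y) a :=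
  stmt15_general a x y z hax hay h1 h2
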